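/- Let c < 0, 0 < μ ≤ |c|, ν > 0, and let g_{μ,ν} be the inner product on 𝔤_c with matrix diag(1, μ, ν) in the basis e₀, e₁, e₂, with Levi-Civita product ∇. Then the symmetry subspace 𝔰 = {v ∈ 𝔤_c : ∇_u v = [u,v] for all u ∈ 𝔤_c} equals ℝ·e₂ if μ = |c| and equals {0} if μ < |c|. (Consequently the index of symmetry of (G_c, g_{μ,ν}) is 1 when μ = |c| and 0 when μ < |c|.) -/
import Mathlib


noncomputable section

open scoped BigOperators

/-- The underlying space of the 3-dimensional Lie algebras under consideration. -/
abbrev V3 : Type := Fin 3 → ℝ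

/-- The standard basis `e₀, e₁, e₂`. -/
def e3 (i : Fin 3) : V3 := Pi.single i 1

/-- The bracket of the Lie algebra `𝔤_c`:
`[e₀,e₁] = 0`, `[e₂,e₀] = e₁`, `[e₂,e₁] = −c e₀ + 2 e₁`, extended bilinearly. -/
def braC (c : ℝ) (x y : V3) : V3 :=
  ![-c * (x 2 * y 1 - y 2 * x 1),
    (x 2 * y 0 - y 2 * x 0) + 2 * (x 2 * y 1 - y 2 * x 1),
    0]

/-- The inner product with matrix `diag(1,μ,ν)` in the basis `e₀,e₁,e₂`. -/
def gD (μ ν : ℝ) (x y : V3) : ℝ := x 0 * y 0 + μ * (x 1 * y 1) + ν * (x 2 * y 2)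

lemma gD_nondeg (μ ν : ℝ) (hμ0 : 0 < μ) (hν : 0 < ν) (w : V3)
    (h : ∀ Z : V3, gD μ ν w Z = 0) : w = 0 := by
  have h0 := h (e3 0)
  have h1 := h (e3 1)
  have h2 := h (e3 2)
  simp [gD, e3, Pi.single_apply] at h0 h1 h2
  funext i
  fin_cases i
  · simpa using h0
  · simpa using (by rcases h1 with h1 | h1; exact absurd h1 hμ0.ne'; exact h1)
  · simpa using (by rcases h2 with h2 | h2; exact absurd h2 hν.ne'; exact h2)

/-- The symmetry condition is equivalent to a Koszul-type identity. -/
lemma sym_iff (c μ ν : ℝ) (hμ0 : 0 < μ) (hν : 0 < ν)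
    (nab : V3 → V3 → V3)
    (hK : ∀ X Y Z : V3, 2 * gD μ ν (nab X Y) Z =
      gD μ ν (braC c X Y) Z - gD μ ν (braC c Y Z) X + gD μ ν (braC c Z X) Y)
    (v : V3) :
    (∀ u : V3, nab u v = braC c u v) ↔
      (∀ u Z : V3, gD μ ν (braC c u v) Z + gD μ ν (braC c v Z) u
        - gD μ ν (braC c Z u) v = 0) := by
  constructor
  · intro h u Z
    have hk := hK u v Z
    rw [h u] at hk
    linarith
  · intro h u
    have key : ∀ Z : V3, gD μ ν (nab u v - braC c u v) Z = 0 := by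
      intro Z
      have hk := hK u v Z
      have hF := h u Z
      have hsub : gD μ ν (nab u v - braC c u v) Z
          = gD μ ν (nab u v) Z - gD μ ν (braC c u v) Z := by
        simp [gD, Pi.sub_apply]; ring
      rw [hsub]; linarith
    have := gD_nondeg μ ν hμ0 hν _ key
    exact sub_eq_zero.mp this

/-- for `c < 0` and `0 < μ ≤ |c|`, the symmetry subspace
`𝔰 = {v : ∇_u v = [u,v] for all u}` of `(𝔤_c, g_{μ,ν})` is `ℝ e₂` when `μ = |c|`
and `{0}` when `μ < |c|`. -/
theorem stmt14 (c μ ν : ℝ) (hc : c < 0) (hμ0 : 0 < μ) (hμc : μ ≤ |c|) (hν : 0 < ν)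
    (nab : V3 → V3 → V3)
    (hK : ∀ X Y Z : V3, 2 * gD μ ν (nab X Y) Z =
      gD μ ν (braC c X Y) Z - gD μ ν (braC c Y Z) X + gD μ ν (braC c Z X) Y) :
    (μ = |c| → ∀ v : V3,
      (∀ u : V3, nab u v = braC c u v) ↔ ∃ t : ℝ, v = t • e3 2) ∧
    (μ < |c| → ∀ v : V3,
      (∀ u : V3, nab u v = braC c u v) ↔ v = 0) := by
  have habs : |c| = -c := abs_of_neg hc
  have hcμ : c - μ < 0 := by linarith
  constructor
  · intro hμ v
    rw [sym_iff c μ ν hμ0 hν nab hK v]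
    constructor
    · intro h
      -- derive v 1 = 0 and v 0 = 0
      have h02 := h (e3 0) (e3 2)
      have h12 := h (e3 1) (e3 2)
      simp [gD, braC, e3, Pi.single_apply] at h02 h12
      have hv1 : v 1 = 0 := by
        rcases mul_eq_zero.mp (by nlinarith : (c - μ) * v 1 = 0) with h' | h'
        · linarith
        · exact h'
      have hv0 : v 0 = 0 := by
        rcases mul_eq_zero.mp (by nlinarith : (c - μ) * v 0 = 0) with h' | h'
        · linarith
        · exact h'
      refine ⟨v 2, ?_⟩
      funext i
      fin_cases i <;> simp [e3, Pi.single_apply, hv0, hv1]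
    · rintro ⟨t, rfl⟩ u Z
      have hμc' : μ = -c := by rw [hμ, habs]
      simp [gD, braC, e3, Pi.single_apply, hμc']
      ring
  · intro hμ v
    rw [sym_iff c μ ν hμ0 hν nab hK v]
    constructor
    · intro h
      have h02 := h (e3 0) (e3 2)
      have h12 := h (e3 1) (e3 2)
      have h01 := h (e3 0) (e3 1)
      simp [gD, braC, e3, Pi.single_apply] at h02 h12 h01
      have hv1 : v 1 = 0 := by
        rcases mul_eq_zero.mp (by nlinarith : (c - μ) * v 1 = 0) with h' | h'
        · linarith
        · exact h'
      have hv0 : v 0 = 0 := by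
        rcases mul_eq_zero.mp (by nlinarith : (c - μ) * v 0 = 0) with h' | h'
        · linarith
        · exact h'
      have hμc2 : μ + c < 0 := by rw [habs] at hμ; linarith
      have hv2 : v 2 = 0 := by
        rcases mul_eq_zero.mp (by nlinarith : (μ + c) * v 2 = 0) with h' | h'
        · linarith
        · exact h'
      funext i
      fin_cases i <;> simp [hv0, hv1, hv2]
    · rintro rfl u Z
      simp [gD, braC]
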